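/- For every X ⊆ ℝⁿ and every k ∈ ℕ, the k-fold Cartesian power X^k ⊆ ℝ^{nk} satisfies dim_CM(X^k) = k · dim_CM(X). -/

import Mathlib

open Filter Metric Set

/-- `coverNum δ X` is the minimum number of open balls of radius `δ` needed to cover `X`. -/
noncomputable def coverNum {α : Type*} [PseudoMetricSpace α] (δ : ℝ) (X : Set α) : ℕ :=
  sInf {k : ℕ | ∃ S : Finset α, S.card = k ∧ X ⊆ ⋃ p ∈ S, Metric.ball p δ}

/-- The coarse Minkowski dimension of `Z`. -/
noncomputable def dimCM {α : Type*} [SeminormedAddGroup α] (Z : Set α) : ℝ :=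
  limsup (fun r : ℝ =>
    Real.log (coverNum 1 (Metric.ball (0 : α) r ∩ Z) : ℝ) / Real.log r) atTop

/-- The `k`-fold Cartesian power `X^k ⊆ ℝ^(nk)` of `X ⊆ ℝ^n`, with `ℝ^(nk)` realized as the
Euclidean space indexed by `Fin k × Fin n`. -/
def powSet {n : ℕ} (X : Set (EuclideanSpace ℝ (Fin n))) (k : ℕ) :
    Set (EuclideanSpace ℝ (Fin k × Fin n)) :=
  {z | ∀ j : Fin k, (WithLp.toLp 2 (fun i => z (j, i)) : EuclideanSpace ℝ (Fin n)) ∈ X}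

/-
If `ball 0 r ∩ X` is covered by `N(r)` unit balls, products of their centres are `√k`-close to
every point of `ball 0 r ∩ X^k`, so `N_k(r) ≤ C · N(r)^k`. Conversely, a maximal `2`-separated
subset of `ball 0 r ∩ X` is a `3`-net, hence has at least `N(r) / C'` points, and its `k`-th power
is a `2`-separated subset of `ball 0 (√k r) ∩ X^k`, so `N(r)^k ≤ C'^k · N_k(√k r)`. Constant factors
and the rescaling `r ↦ √k r` do not change the exponent `limsup log N(r) / log r`, which is finite
because balls in a finite-dimensional normed space are doubling.
-/

open scoped NNReal

section CoverNum

variable {α : Type*} [PseudoMetricSpace α] {δ : ℝ} {A B : Set α}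

lemma coverNum_le_card {S : Finset α} (hS : A ⊆ ⋃ p ∈ S, ball p δ) : coverNum δ A ≤ S.card :=
  Nat.sInf_le ⟨S, rfl, hS⟩

lemma TotallyBounded.exists_finset_card_eq_coverNum (hA : TotallyBounded A) (hδ : 0 < δ) :
    ∃ S : Finset α, S.card = coverNum δ A ∧ A ⊆ ⋃ p ∈ S, ball p δ := by
  obtain ⟨t, ht, hAt⟩ := totallyBounded_iff.mp hA δ hδ
  exact Nat.sInf_mem (s := {k | ∃ S : Finset α, S.card = k ∧ A ⊆ ⋃ p ∈ S, ball p δ})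
    ⟨_, ht.toFinset, rfl, by simpa using hAt⟩

lemma coverNum_mono (hB : TotallyBounded B) (hδ : 0 < δ) (hAB : A ⊆ B) :
    coverNum δ A ≤ coverNum δ B := by
  obtain ⟨S, hS, hBS⟩ := hB.exists_finset_card_eq_coverNum hδ
  exact hS ▸ coverNum_le_card (hAB.trans hBS)

lemma coverNum_le_one [Subsingleton α] [Nonempty α] (hδ : 0 < δ) : coverNum δ A ≤ 1 := by
  inhabit α
  refine coverNum_le_card (S := {default}) fun x _ => ?_
  simpa [Subsingleton.elim x default] using hδ

lemma totallyBounded_ball [ProperSpace α] (x : α) (r : ℝ) : TotallyBounded (ball x r) :=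
  (isCompact_closedBall x r).totallyBounded.subset ball_subset_closedBall

lemma Metric.IsSeparated.card_le_coverNum {ε : ℝ≥0} {P : Finset α} (hPA : ↑P ⊆ A)
    (hP : IsSeparated (2 * ε : ℝ≥0) (P : Set α)) (hA : TotallyBounded A) (hε : 0 < ε) :
    P.card ≤ coverNum ε A := by
  obtain ⟨S, hS, hAS⟩ := hA.exists_finset_card_eq_coverNum (NNReal.coe_pos.mpr hε)
  have hcover : IsCover ε A (S : Set α) := by
    refine IsCover.of_subset_iUnion_closedBall (hAS.trans ?_)
    exact iUnion₂_mono fun p _ => ball_subset_closedBall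
  have := (hP.encard_le_packingNumber hPA).trans <|
    (packingNumber_two_mul_le_externalCoveringNumber ε A).trans
      hcover.externalCoveringNumber_le_encard
  rw [Set.encard_coe_eq_coe_finsetCard, Set.encard_coe_eq_coe_finsetCard, hS] at this
  exact_mod_cast this

lemma TotallyBounded.exists_isSeparated_isCover {ε : ℝ≥0} (hA : TotallyBounded A) (hε : 0 < ε) :
    ∃ P : Finset α, ↑P ⊆ A ∧ IsSeparated (2 * ε : ℝ≥0) (P : Set α) ∧
      IsCover (2 * ε) A (P : Set α) := by
  obtain ⟨N, -, hN, hAN⟩ := exists_finite_isCover_of_totallyBounded hε.ne' hA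
  have hfin : packingNumber (2 * ε) A ≠ ⊤ :=
    ne_top_of_le_ne_top (hN.encard_lt_top.ne)
      ((packingNumber_two_mul_le_externalCoveringNumber ε A).trans
        hAN.externalCoveringNumber_le_encard)
  have hP : (maximalSeparatedSet (2 * ε) A).Finite :=
    Set.encard_ne_top_iff.mp (by rwa [encard_maximalSeparatedSet hfin])
  refine ⟨hP.toFinset, ?_, ?_, ?_⟩ <;> rw [hP.coe_toFinset]
  exacts [maximalSeparatedSet_subset, isSeparated_maximalSeparatedSet,
    isCover_maximalSeparatedSet hfin]

end CoverNum

section Normed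

variable {E : Type*} [SeminormedAddCommGroup E] [ProperSpace E] {δ : ℝ} {A : Set E}

lemma coverNum_le_card_mul_coverNum_ball (hδ : 0 < δ) {P : Finset E} {R : ℝ}
    (hAP : A ⊆ ⋃ p ∈ P, ball p R) : coverNum δ A ≤ P.card * coverNum δ (ball (0 : E) R) := by
  classical
  obtain ⟨T, hT, hRT⟩ := (totallyBounded_ball (0 : E) R).exists_finset_card_eq_coverNum hδ
  have hcover : A ⊆ ⋃ q ∈ (P ×ˢ T).image (fun q => q.1 + q.2), ball q δ := by
    intro x hx
    obtain ⟨p, hp, hxp⟩ := mem_iUnion₂.mp (hAP hx)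
    have : x - p ∈ ball (0 : E) R := by rwa [mem_ball, dist_zero_right, ← dist_eq_norm]
    obtain ⟨t, ht, hxt⟩ := mem_iUnion₂.mp (hRT this)
    refine mem_iUnion₂.mpr
      ⟨p + t, Finset.mem_image.mpr ⟨(p, t), Finset.mem_product.mpr ⟨hp, ht⟩, rfl⟩, ?_⟩
    rwa [mem_ball, dist_eq_norm, ← sub_sub, ← dist_eq_norm]
  calc coverNum δ A ≤ ((P ×ˢ T).image (fun q => q.1 + q.2)).card := coverNum_le_card hcover
    _ ≤ (P ×ˢ T).card := Finset.card_image_le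
    _ = P.card * coverNum δ (ball (0 : E) R) := by rw [Finset.card_product, hT]

end Normed

section NormedSpace

variable {E : Type*} [NormedAddCommGroup E] [NormedSpace ℝ E] [ProperSpace E]

lemma coverNum_ball_two_mul_le {ρ : ℝ} (hρ : 0 < ρ) :
    coverNum 1 (ball (0 : E) (2 * ρ)) ≤
      coverNum 1 (ball (0 : E) 2) * coverNum 1 (ball (0 : E) ρ) := by
  classical
  obtain ⟨S, hS, h2S⟩ := (totallyBounded_ball (0 : E) 2).exists_finset_card_eq_coverNum one_pos
  have hcover : ball (0 : E) (2 * ρ) ⊆ ⋃ p ∈ S.image (ρ • ·), ball p ρ := by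
    intro x hx
    have : ρ⁻¹ • x ∈ ball (0 : E) 2 := by
      rw [mem_ball_zero_iff, norm_smul, Real.norm_of_nonneg (inv_nonneg.mpr hρ.le)]
      rw [mem_ball_zero_iff] at hx
      rw [inv_mul_lt_iff₀ hρ]; linarith
    obtain ⟨p, hp, hxp⟩ := mem_iUnion₂.mp (h2S this)
    refine mem_iUnion₂.mpr ⟨ρ • p, Finset.mem_image_of_mem _ hp, ?_⟩
    rw [mem_ball] at hxp ⊢
    calc dist x (ρ • p) = ρ * dist (ρ⁻¹ • x) p := by
          rw [← Real.norm_of_nonneg hρ.le, ← dist_smul₀, Real.norm_of_nonneg hρ.le,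
            smul_inv_smul₀ hρ.ne']
      _ < ρ := by nlinarith
  calc coverNum 1 (ball (0 : E) (2 * ρ))
        ≤ (S.image (ρ • ·)).card * coverNum 1 (ball (0 : E) ρ) :=
        coverNum_le_card_mul_coverNum_ball one_pos hcover
    _ ≤ _ := hS ▸ Nat.mul_le_mul_right _ Finset.card_image_le

lemma coverNum_ball_two_pow_le (j : ℕ) :
    coverNum 1 (ball (0 : E) (2 ^ j)) ≤ coverNum 1 (ball (0 : E) 2) ^ j := by
  induction j with
  | zero => simpa using coverNum_le_card (S := {(0 : E)}) (A := ball (0 : E) 1) (by simp)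
  | succ j ih =>
    rw [pow_succ', pow_succ']
    exact (coverNum_ball_two_mul_le (by positivity)).trans (Nat.mul_le_mul_left _ ih)

end NormedSpace

lemma Real.log_natCast_le_log_natCast {a b : ℕ} (h : a ≤ b) : Real.log a ≤ Real.log b := by
  rcases a.eq_zero_or_pos with rfl | ha
  · simpa using Real.log_natCast_nonneg b
  · exact Real.log_le_log (by exact_mod_cast ha) (by exact_mod_cast h)

lemma Real.log_natCast_mul_le (a b : ℕ) :
    Real.log ((a * b : ℕ) : ℝ) ≤ Real.log a + Real.log b := by
  rcases eq_or_ne a 0 with rfl | ha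
  · simpa using Real.log_natCast_nonneg b
  rcases eq_or_ne b 0 with rfl | hb
  · simpa using Real.log_natCast_nonneg a
  rw [Nat.cast_mul, Real.log_mul (by exact_mod_cast ha) (by exact_mod_cast hb)]

lemma limsup_div_log_le_mul {F G : ℝ → ℝ} {c a C : ℝ} (hc : 0 ≤ c) (ha : 0 < a)
    (hG : IsBoundedUnder (· ≤ ·) atTop fun r => G r / Real.log r)
    (hF : IsCoboundedUnder (· ≤ ·) atTop fun r => F r / Real.log r)
    (hFG : ∀ᶠ r in atTop, F r ≤ c * G (a * r) + C) :
    limsup (fun r => F r / Real.log r) atTop ≤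
      c * limsup (fun r => G r / Real.log r) atTop := by
  set L := limsup (fun r => G r / Real.log r) atTop
  refine le_of_forall_pos_le_add fun ε hε => ?_
  set η := ε / (c + 1)
  have hη : 0 < η := by positivity
  have hGa : ∀ᶠ r in atTop, G (a * r) / Real.log (a * r) < L + η :=
    (tendsto_id.const_mul_atTop ha).eventually (eventually_lt_of_limsup_lt (by linarith) hG)
  have hlog : ∀ᶠ r in atTop, c * (L + η) * Real.log a + C ≤ η * Real.log r := by
    filter_upwards
      [Real.tendsto_log_atTop.eventually_ge_atTop ((c * (L + η) * Real.log a + C) / η)] with r hr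
    rw [div_le_iff₀ hη] at hr
    linarith
  refine limsup_le_of_le hF ?_
  filter_upwards [hGa, hlog, hFG, eventually_gt_atTop 1, eventually_gt_atTop a⁻¹]
    with r hGr hlogr hFr hr1 hra
  have hlogr_pos : 0 < Real.log r := Real.log_pos hr1
  have har : 1 < a * r := by rwa [← inv_mul_lt_iff₀ ha, mul_one]
  rw [div_lt_iff₀ (Real.log_pos har), Real.log_mul ha.ne' (by linarith)] at hGr
  have hcG : c * G (a * r) ≤ c * ((L + η) * (Real.log a + Real.log r)) :=
    mul_le_mul_of_nonneg_left hGr.le hc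
  have hε' : ε = (c + 1) * η := by simp only [η]; field_simp
  rw [div_le_iff₀ hlogr_pos, hε']
  nlinarith

section LogCoverNum

lemma isCoboundedUnder_le_log_coverNum_div_log {α : Type*} [SeminormedAddGroup α] (Z : Set α) :
    IsCoboundedUnder (· ≤ ·) atTop fun r =>
      Real.log (coverNum 1 (ball (0 : α) r ∩ Z)) / Real.log r := by
  refine isCoboundedUnder_le_of_eventually_le atTop (x := 0) ?_
  filter_upwards [eventually_gt_atTop 1] with r hr
  exact div_nonneg (Real.log_natCast_nonneg _) (Real.log_pos hr).le

variable {E : Type*} [NormedAddCommGroup E] [NormedSpace ℝ E] [ProperSpace E]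

lemma exists_log_coverNum_ball_le :
    ∃ D, ∀ᶠ r in atTop, Real.log (coverNum 1 (ball (0 : E) r)) ≤ D * Real.log r := by
  set M := coverNum 1 (ball (0 : E) 2)
  have hlog2 : 0 < Real.log 2 := Real.log_pos one_lt_two
  refine ⟨2 * Real.log M / Real.log 2, ?_⟩
  filter_upwards [eventually_ge_atTop 2] with r hr
  obtain ⟨j, hjr, hrj⟩ := exists_nat_pow_near (by linarith : (1 : ℝ) ≤ r) one_lt_two
  have hcover : coverNum 1 (ball (0 : E) r) ≤ M ^ (j + 1) :=
    (coverNum_mono (totallyBounded_ball _ _) one_pos (ball_subset_ball hrj.le)).trans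
      (coverNum_ball_two_pow_le (j + 1))
  have hj : (j + 1) * Real.log 2 ≤ 2 * Real.log r := by
    have h1 : j * Real.log 2 ≤ Real.log r := by
      rw [← Real.log_pow]; exact Real.log_le_log (by positivity) hjr
    have h2 : Real.log 2 ≤ Real.log r := Real.log_le_log two_pos hr
    linarith
  calc Real.log (coverNum 1 (ball (0 : E) r)) ≤ (j + 1) * Real.log M := by
        simpa using Real.log_natCast_le_log_natCast hcover
    _ ≤ 2 * Real.log M / Real.log 2 * Real.log r := by
        rw [div_mul_eq_mul_div, le_div_iff₀ hlog2]
        nlinarith [Real.log_natCast_nonneg M]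

lemma isBoundedUnder_le_log_coverNum_div_log (Z : Set E) :
    IsBoundedUnder (· ≤ ·) atTop fun r =>
      Real.log (coverNum 1 (ball (0 : E) r ∩ Z)) / Real.log r := by
  obtain ⟨D, hD⟩ := exists_log_coverNum_ball_le (E := E)
  refine isBoundedUnder_of_eventually_le (a := D) ?_
  filter_upwards [hD, eventually_gt_atTop 1] with r hDr hr
  rw [div_le_iff₀ (Real.log_pos hr)]
  exact (Real.log_natCast_le_log_natCast
    (coverNum_mono (totallyBounded_ball _ _) one_pos inter_subset_left)).trans hDr

end LogCoverNum

namespace EuclideanSpace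

variable {ι κ : Type*}

def row (j : ι) (z : EuclideanSpace ℝ (ι × κ)) : EuclideanSpace ℝ κ :=
  WithLp.toLp 2 fun i => z (j, i)

def ofRows (c : ι → EuclideanSpace ℝ κ) : EuclideanSpace ℝ (ι × κ) :=
  WithLp.toLp 2 fun p => c p.1 p.2

@[simp] lemma row_ofRows (c : ι → EuclideanSpace ℝ κ) (j : ι) : row j (ofRows c) = c j := rfl

@[simp] lemma row_zero (j : ι) : row j (0 : EuclideanSpace ℝ (ι × κ)) = 0 := rfl

def rowsIn (ι : Type*) (X : Set (EuclideanSpace ℝ κ)) : Set (EuclideanSpace ℝ (ι × κ)) :=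
  {z | ∀ j, row j z ∈ X}

lemma ofRows_injective : Function.Injective (ofRows : (ι → EuclideanSpace ℝ κ) → _) :=
  fun _ _ h => funext fun j => PiLp.ext fun i => congrFun (congrArg WithLp.ofLp h) (j, i)

variable [Fintype ι] [Fintype κ]

lemma dist_sq_eq_sum_dist_row_sq (z w : EuclideanSpace ℝ (ι × κ)) :
    dist z w ^ 2 = ∑ j, dist (row j z) (row j w) ^ 2 := by
  simp only [EuclideanSpace.dist_eq, Fintype.sum_prod_type]
  rw [Real.sq_sqrt (by positivity)]
  refine Finset.sum_congr rfl fun j _ => ?_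
  rw [Real.sq_sqrt (by positivity)]
  rfl

lemma dist_row_le (j : ι) (z w : EuclideanSpace ℝ (ι × κ)) :
    dist (row j z) (row j w) ≤ dist z w := by
  rw [← pow_le_pow_iff_left₀ dist_nonneg dist_nonneg two_ne_zero, dist_sq_eq_sum_dist_row_sq]
  exact Finset.single_le_sum (f := fun j => dist (row j z) (row j w) ^ 2)
    (fun _ _ => sq_nonneg _) (Finset.mem_univ j)

lemma edist_row_le (j : ι) (z w : EuclideanSpace ℝ (ι × κ)) :
    edist (row j z) (row j w) ≤ edist z w := by
  simpa only [edist_dist] using ENNReal.ofReal_le_ofReal (dist_row_le j z w)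

lemma dist_ofRows_lt [Nonempty ι] {z : EuclideanSpace ℝ (ι × κ)} {c : ι → EuclideanSpace ℝ κ}
    {ρ : ℝ} (h : ∀ j, dist (row j z) (c j) < ρ) :
    dist z (ofRows c) < √(Fintype.card ι) * ρ := by
  have hρ : 0 ≤ ρ := dist_nonneg.trans (h (Classical.arbitrary ι)).le
  rw [← pow_lt_pow_iff_left₀ dist_nonneg (by positivity) two_ne_zero, mul_pow,
    Real.sq_sqrt (Nat.cast_nonneg _), dist_sq_eq_sum_dist_row_sq]
  calc ∑ j, dist (row j z) (row j (ofRows c)) ^ 2 < ∑ _j : ι, ρ ^ 2 :=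
        Finset.sum_lt_sum_of_nonempty Finset.univ_nonempty fun j _ => by
          rw [row_ofRows]; exact pow_lt_pow_left₀ (h j) dist_nonneg two_ne_zero
    _ = Fintype.card ι * ρ ^ 2 := by simp

variable [Nonempty ι] (X : Set (EuclideanSpace ℝ κ)) (r : ℝ)

lemma coverNum_ball_inter_rowsIn_le :
    coverNum 1 (ball 0 r ∩ rowsIn ι X) ≤
      coverNum 1 (ball 0 r ∩ X) ^ Fintype.card ι *
        coverNum 1 (ball (0 : EuclideanSpace ℝ (ι × κ)) √(Fintype.card ι)) := by
  classical
  obtain ⟨S, hS, hXS⟩ :=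
    ((totallyBounded_ball (0 : EuclideanSpace ℝ κ) r).subset inter_subset_left)
      |>.exists_finset_card_eq_coverNum one_pos
  have hcover : ball 0 r ∩ rowsIn ι X ⊆
      ⋃ c ∈ (Fintype.piFinset fun _ : ι => S).image ofRows, ball c √(Fintype.card ι) := by
    rintro z ⟨hz, hzX⟩
    have hrow (j : ι) : ∃ s ∈ S, dist (row j z) s < 1 := by
      have hj : row j z ∈ ball 0 r := by
        rw [mem_ball, ← row_zero j]; exact (dist_row_le j z 0).trans_lt hz
      simpa only [mem_iUnion₂, mem_ball, exists_prop] using hXS ⟨hj, hzX j⟩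
    choose c hcS hzc using hrow
    refine mem_iUnion₂.mpr
      ⟨ofRows c, Finset.mem_image_of_mem _ (Fintype.mem_piFinset.mpr hcS), ?_⟩
    simpa using dist_ofRows_lt hzc
  refine (coverNum_le_card_mul_coverNum_ball one_pos hcover).trans (Nat.mul_le_mul_right _ ?_)
  exact Finset.card_image_le.trans (by simp [hS])

/-- Here `m` is the size of a maximal `2`-separated subset of `ball 0 r ∩ X`: that subset is a
`3`-net of `ball 0 r ∩ X`, and its `ι`-th power is still `2`-separated. -/
lemma exists_coverNum_ball_inter_le_and_pow_le :
    ∃ m : ℕ, coverNum 1 (ball 0 r ∩ X) ≤ m * coverNum 1 (ball (0 : EuclideanSpace ℝ κ) 3) ∧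
      m ^ Fintype.card ι ≤ coverNum 1
        (ball 0 (√(Fintype.card ι) * r) ∩ rowsIn ι X) := by
  classical
  obtain ⟨P, hPX, hPsep, hXP⟩ :=
    ((totallyBounded_ball (0 : EuclideanSpace ℝ κ) r).subset inter_subset_left)
      |>.exists_isSeparated_isCover one_pos
  refine ⟨P.card, coverNum_le_card_mul_coverNum_ball one_pos ?_, ?_⟩
  · refine hXP.subset_iUnion_closedBall.trans (iUnion₂_mono fun p _ => ?_)
    exact closedBall_subset_ball (by norm_num)
  set Q := (Fintype.piFinset fun _ : ι => P).image ofRows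
  have hQ : Q.card = P.card ^ Fintype.card ι := by
    rw [Finset.card_image_of_injective _ ofRows_injective, Fintype.card_piFinset]
    simp
  have hQsub : (Q : Set (EuclideanSpace ℝ (ι × κ))) ⊆
      ball 0 (√(Fintype.card ι) * r) ∩ rowsIn ι X := by
    intro z hz
    obtain ⟨c, hc, rfl⟩ := Finset.mem_image.mp hz
    have hcX (j : ι) : c j ∈ ball 0 r ∩ X := hPX (Fintype.mem_piFinset.mp hc j)
    refine ⟨?_, fun j => by simpa using (hcX j).2⟩
    rw [mem_ball, dist_comm]
    exact dist_ofRows_lt fun j => by simpa [dist_comm] using (hcX j).1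
  have hQsep : IsSeparated (2 * 1 : ℝ≥0) (Q : Set (EuclideanSpace ℝ (ι × κ))) := by
    rintro _ hx _ hy hxy
    obtain ⟨c, hc, rfl⟩ := Finset.mem_image.mp hx
    obtain ⟨c', hc', rfl⟩ := Finset.mem_image.mp hy
    obtain ⟨j, hj⟩ := Function.ne_iff.mp (ne_of_apply_ne ofRows hxy)
    calc _ < edist (c j) (c' j) :=
          hPsep (Fintype.mem_piFinset.mp hc j) (Fintype.mem_piFinset.mp hc' j) hj
      _ ≤ _ := by simpa using edist_row_le j (ofRows c) (ofRows c')
  rw [← hQ]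
  simpa using hQsep.card_le_coverNum (ε := 1) hQsub
    ((totallyBounded_ball _ _).subset inter_subset_left) one_pos

end EuclideanSpace

lemma dimCM_of_subsingleton {α : Type*} [SeminormedAddGroup α] [Subsingleton α] (Z : Set α) :
    dimCM Z = 0 := by
  have hlog (r : ℝ) : Real.log (coverNum 1 (ball (0 : α) r ∩ Z)) = 0 := by
    rcases Nat.le_one_iff_eq_zero_or_eq_one.mp
      (coverNum_le_one (A := ball (0 : α) r ∩ Z) one_pos) with h | h <;> simp [h]
  simp [dimCM, hlog]

section Rows

open EuclideanSpace

variable {ι κ : Type*} [Fintype ι] [Fintype κ] [Nonempty ι] (X : Set (EuclideanSpace ℝ κ))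

lemma dimCM_rowsIn_le :
    dimCM (rowsIn ι X) ≤ Fintype.card ι * dimCM X := by
  refine limsup_div_log_le_mul (Nat.cast_nonneg _) one_pos
    (isBoundedUnder_le_log_coverNum_div_log X) (isCoboundedUnder_le_log_coverNum_div_log _)
    (C := Real.log (coverNum 1 (ball (0 : EuclideanSpace ℝ (ι × κ)) √(Fintype.card ι))))
    (Eventually.of_forall fun r => ?_)
  calc _ ≤ Real.log ((coverNum 1 (ball 0 r ∩ X) ^ Fintype.card ι : ℕ) : ℝ) +
        Real.log (coverNum 1 (ball (0 : EuclideanSpace ℝ (ι × κ)) √(Fintype.card ι))) :=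
        (Real.log_natCast_le_log_natCast (coverNum_ball_inter_rowsIn_le X r)).trans
          (Real.log_natCast_mul_le _ _)
    _ = _ := by rw [Nat.cast_pow, Real.log_pow, one_mul]

lemma card_mul_dimCM_le_dimCM_rowsIn :
    Fintype.card ι * dimCM X ≤ dimCM (rowsIn ι X) := by
  have hcard : (0 : ℝ) < Fintype.card ι := Nat.cast_pos.mpr Fintype.card_pos
  rw [← le_div_iff₀' hcard, div_eq_inv_mul]
  refine limsup_div_log_le_mul (inv_nonneg.mpr hcard.le) (Real.sqrt_pos.mpr hcard)
    (isBoundedUnder_le_log_coverNum_div_log _) (isCoboundedUnder_le_log_coverNum_div_log X)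
    (C := Real.log (coverNum 1 (ball (0 : EuclideanSpace ℝ κ) 3)))
    (Eventually.of_forall fun r => ?_)
  obtain ⟨m, hXm, hm⟩ := exists_coverNum_ball_inter_le_and_pow_le (ι := ι) X r
  have hlogm : Real.log m ≤ (Fintype.card ι : ℝ)⁻¹ *
      Real.log (coverNum 1 (ball 0 (√(Fintype.card ι) * r) ∩ rowsIn ι X)) := by
    rw [le_inv_mul_iff₀ hcard, ← Real.log_pow, ← Nat.cast_pow]
    exact Real.log_natCast_le_log_natCast hm
  linarith [(Real.log_natCast_le_log_natCast hXm).trans (Real.log_natCast_mul_le _ _)]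

end Rows

lemma powSet_eq_rowsIn {n : ℕ} (X : Set (EuclideanSpace ℝ (Fin n))) (k : ℕ) :
    powSet X k = EuclideanSpace.rowsIn (Fin k) X := rfl

theorem stmt7 (n : ℕ) (X : Set (EuclideanSpace ℝ (Fin n))) (k : ℕ) :
    dimCM (powSet X k) = (k : ℝ) * dimCM X := by
  rcases k.eq_zero_or_pos with rfl | hk
  · simp [dimCM_of_subsingleton]
  · have : Nonempty (Fin k) := ⟨⟨0, hk⟩⟩
    rw [powSet_eq_rowsIn]
    simpa using le_antisymm (dimCM_rowsIn_le (ι := Fin k) X) (card_mul_dimCM_le_dimCM_rowsIn X)
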